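/- arXiv:0807.4801 — 4 statements merged into one kernel-verified Lean document; each statement's English description precedes it below -/
import Mathlib

section
/- Let A_Γ be a right-angled Artin group, let a, b, x be letters (generators or their inverses) with a dominating b, a ≠ b, and suppose the one-term partial conjugation c_{x,Y} (conjugating each element of a set Y of generators by x) is an automorphism of A_Γ. If a ∈ Y, b ∉ Y ∪ {x, x⁻¹}, then τ_{a,b} c_{x,Y} τ_{a,b}^{-1} = c_{x,Y} τ_{[x,a],b}, where τ_{a,b} is the transvection b ↦ ba and τ_{[x,a],b} is the automorphism b ↦ b[x,a] fixing all other generators. -/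
open scoped commutatorElement

/-- The defining relators of the right-angled Artin group of a simplicial graph `Γ`. -/
def raagRels {V : Type*} (Γ : SimpleGraph V) : Set (FreeGroup V) :=
  {r | ∃ x y : V, Γ.Adj x y ∧ r = ⁅FreeGroup.of x, FreeGroup.of y⁆}

/-- The right-angled Artin group `A_Γ` of a simplicial graph `Γ`. -/
abbrev RAAG {V : Type*} (Γ : SimpleGraph V) : Type _ := PresentedGroup (raagRels Γ)

/-- The generator of `A_Γ` corresponding to a vertex `v`. -/
def raagGen {V : Type*} (Γ : SimpleGraph V) (v : V) : RAAG Γ := PresentedGroup.of v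

/-- Domination: `a ≥ b` iff `lk(b) ⊆ st(a)`. -/
def Dominates {V : Type*} (Γ : SimpleGraph V) (a b : V) : Prop :=
  ∀ v : V, Γ.Adj b v → (v = a ∨ Γ.Adj a v)

/-! Since `τ` fixes every generator but `b`, the identity is checked on generators in the form
`τ c = c t τ`. For a generator of `Y` both sides give its conjugate by `x` (as `x ≠ b`); for `b`,
`c (t (τ b)) = b ⁅x, x⁻¹ a x⁆ (x⁻¹ a x) = b a = τ (c b)`. -/

theorem PresentedGroup.mulAut_ext {α : Type*} {rels : Set (FreeGroup α)}
    {σ ρ : MulAut (PresentedGroup rels)}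
    (h : ∀ v, σ (PresentedGroup.of v) = ρ (PresentedGroup.of v)) : σ = ρ :=
  MulEquiv.toMonoidHom_injective (PresentedGroup.ext h)

theorem commutatorElement_conj_mul_conj {G : Type*} [Group G] (x a : G) :
    ⁅x, x⁻¹ * a * x⁆ * (x⁻¹ * a * x) = a := by
  group

theorem stmt8_general {V : Type*} (Γ : SimpleGraph V) (a b x : V)
    (hab : a ≠ b)
    (Y : Set V)
    (hYst : ∀ y ∈ Y, y ≠ x ∧ ¬ Γ.Adj x y)
    (haY : a ∈ Y) (hbY : b ∉ Y) (hbx : b ≠ x)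
    (τ c t : MulAut (RAAG Γ))
    (hτ1 : τ (raagGen Γ b) = raagGen Γ b * raagGen Γ a)
    (hτ2 : ∀ v : V, v ≠ b → τ (raagGen Γ v) = raagGen Γ v)
    (hc1 : ∀ y ∈ Y, c (raagGen Γ y) = (raagGen Γ x)⁻¹ * raagGen Γ y * raagGen Γ x)
    (hc2 : ∀ v : V, v ∉ Y → c (raagGen Γ v) = raagGen Γ v)
    (ht1 : t (raagGen Γ b) = raagGen Γ b * ⁅raagGen Γ x, raagGen Γ a⁆)
    (ht2 : ∀ v : V, v ≠ b → t (raagGen Γ v) = raagGen Γ v) :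
    τ * c * τ⁻¹ = c * t := by
  have hxY : x ∉ Y := fun h => (hYst x h).1 rfl
  rw [mul_inv_eq_iff_eq_mul]
  refine PresentedGroup.mulAut_ext fun v => ?_
  change τ (c (raagGen Γ v)) = c (t (τ (raagGen Γ v)))
  by_cases hvb : v = b
  · rw [hvb, hc2 b hbY, hτ1, map_mul, ht1, ht2 a hab, map_mul, map_mul, map_commutatorElement,
      hc2 b hbY, hc2 x hxY, hc1 a haY, mul_assoc, commutatorElement_conj_mul_conj]
  · rw [hτ2 v hvb, ht2 v hvb]
    by_cases hvY : v ∈ Y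
    · rw [hc1 v hvY, map_mul, map_mul, map_inv, hτ2 x hbx.symm, hτ2 v hvb]
    · rw [hc2 v hvY, hτ2 v hvb]

/-- if `a ≥ b`, `a ≠ b`, `Y` is a union of connected components of
`Γ - st(x)` with `a ∈ Y`, `b ∉ Y ∪ {x}`, then
`τ_{a,b} ∘ c_{x,Y} ∘ τ_{a,b}⁻¹ = c_{x,Y} ∘ τ_{[x,a],b}`, where `τ_{a,b} : b ↦ ba`,
`c_{x,Y}` conjugates the generators in `Y` by `x`, and `τ_{[x,a],b} : b ↦ b[x,a]`. -/
theorem stmt8 {V : Type*} (Γ : SimpleGraph V) (a b x : V)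
    (hdom : Dominates Γ a b) (hab : a ≠ b)
    (Y : Set V)
    (hYst : ∀ y ∈ Y, y ≠ x ∧ ¬ Γ.Adj x y)
    (hYcomp : ∀ y ∈ Y, ∀ z : V, Γ.Adj y z → (z = x ∨ Γ.Adj x z ∨ z ∈ Y))
    (haY : a ∈ Y) (hbY : b ∉ Y) (hbx : b ≠ x)
    (τ c t : MulAut (RAAG Γ))
    (hτ1 : τ (raagGen Γ b) = raagGen Γ b * raagGen Γ a)
    (hτ2 : ∀ v : V, v ≠ b → τ (raagGen Γ v) = raagGen Γ v)
    (hc1 : ∀ y ∈ Y, c (raagGen Γ y) = (raagGen Γ x)⁻¹ * raagGen Γ y * raagGen Γ x)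
    (hc2 : ∀ v : V, v ∉ Y → c (raagGen Γ v) = raagGen Γ v)
    (ht1 : t (raagGen Γ b) = raagGen Γ b * ⁅raagGen Γ x, raagGen Γ a⁆)
    (ht2 : ∀ v : V, v ≠ b → t (raagGen Γ v) = raagGen Γ v) :
    τ * c * τ⁻¹ = c * t :=
  stmt8_general Γ a b x hab Y hYst haY hbY hbx τ c t hτ1 hτ2 hc1 hc2 ht1 ht2
end

section
/- Let A_Γ be a right-angled Artin group and let a, b, x be distinct generators with a ≥ b, x ≥ b. Then the transvection τ_{a,b} (b ↦ ba) conjugates the automorphism τ_{[x,y],b} as follows: τ_{a,b} τ_{[x,y],b} τ_{a,b}^{-1} = c_{a,{b}} τ_{[x,y],b} c_{a,{b}}^{-1}, where y is a generator with y ≥ b, y ∉ {x,a,b}, and c_{a,{b}} is the partial conjugation b ↦ a⁻¹ba. -/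
open scoped commutatorElement

/-!
Both conjugates fix every generator other than `b` and send `b` to `b a [x,y] a⁻¹`; this is a
computation that holds in any group and uses no relation of `A_Γ`.
-/

namespace MulAut

variable {G : Type*} [Group G]

theorem inv_apply_eq_of_apply_eq {φ : MulAut G} {g h : G} (hφ : φ g = h) : φ⁻¹ h = g := by
  rw [← hφ, inv_apply_self]

theorem conj_apply_of_apply_eq_self {φ ψ : MulAut G} {g : G} (hφ : φ g = g) (hψ : ψ g = g) :
    (φ * ψ * φ⁻¹) g = g := by
  rw [mul_apply, mul_apply, inv_apply_eq_of_apply_eq hφ, hψ, hφ]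

variable {a b x y : G} {t : MulAut G}

theorem conj_apply_eq_of_apply_eq_mul (hta : t a = a) (htb : t b = b * ⁅x, y⁆)
    {τ : MulAut G} (hτa : τ a = a) (hτb : τ b = b * a)
    (hτx : τ x = x) (hτy : τ y = y) :
    (τ * t * τ⁻¹) b = b * a * ⁅x, y⁆ * a⁻¹ := by
  have hτinv : τ⁻¹ b = b * a⁻¹ := inv_apply_eq_of_apply_eq (by simp [hτb, hτa])
  simp only [mul_apply, hτinv, map_mul, map_inv, htb, hta, hτa, hτb, commutatorElement_def,
    hτx, hτy]

theorem conj_apply_eq_of_apply_eq_conj (hta : t a = a) (htb : t b = b * ⁅x, y⁆)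
    {c : MulAut G} (hca : c a = a) (hcb : c b = a⁻¹ * b * a) (hcx : c x = x) (hcy : c y = y) :
    (c * t * c⁻¹) b = b * a * ⁅x, y⁆ * a⁻¹ := by
  have hcinv : c⁻¹ b = a * b * a⁻¹ :=
    inv_apply_eq_of_apply_eq (by simp only [map_mul, map_inv, hcb, hca]; group)
  simp only [mul_apply, hcinv, map_mul, map_inv, htb, hta, hca, hcb, commutatorElement_def,
    hcx, hcy]
  group

end MulAut

theorem RAAG.mulAut_ext {V : Type*} {Γ : SimpleGraph V} {φ ψ : MulAut (RAAG Γ)}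
    (h : ∀ v, φ (raagGen Γ v) = ψ (raagGen Γ v)) : φ = ψ :=
  MulEquiv.toMonoidHom_injective (PresentedGroup.ext h)

theorem stmt10_general {V : Type*} (Γ : SimpleGraph V) (a b x y : V)
    (hab : a ≠ b) (hbx : b ≠ x)
    (hyb : y ≠ b)
    (τ t c : MulAut (RAAG Γ))
    (hτ1 : τ (raagGen Γ b) = raagGen Γ b * raagGen Γ a)
    (hτ2 : ∀ v : V, v ≠ b → τ (raagGen Γ v) = raagGen Γ v)
    (ht1 : t (raagGen Γ b) = raagGen Γ b * ⁅raagGen Γ x, raagGen Γ y⁆)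
    (ht2 : ∀ v : V, v ≠ b → t (raagGen Γ v) = raagGen Γ v)
    (hc1 : c (raagGen Γ b) = (raagGen Γ a)⁻¹ * raagGen Γ b * raagGen Γ a)
    (hc2 : ∀ v : V, v ≠ b → c (raagGen Γ v) = raagGen Γ v) :
    τ * t * τ⁻¹ = c * t * c⁻¹ := by
  refine RAAG.mulAut_ext fun v ↦ ?_
  by_cases hv : v = b
  · subst hv
    have hxb : x ≠ v := hbx.symm
    rw [MulAut.conj_apply_eq_of_apply_eq_mul (ht2 a hab) ht1 (hτ2 a hab) hτ1 (hτ2 x hxb)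
        (hτ2 y hyb),
      MulAut.conj_apply_eq_of_apply_eq_conj (ht2 a hab) ht1 (hc2 a hab) hc1 (hc2 x hxb)
        (hc2 y hyb)]
  · rw [MulAut.conj_apply_of_apply_eq_self (hτ2 v hv) (ht2 v hv),
      MulAut.conj_apply_of_apply_eq_self (hc2 v hv) (ht2 v hv)]

/-- for distinct generators `a, b, x` with `a ≥ b`, `x ≥ b`, and a generator
`y ∉ {x, a, b}` with `y ≥ b`, the transvection `τ_{a,b} : b ↦ ba` conjugates
`τ_{[x,y],b} : b ↦ b[x,y]` as `τ_{a,b} τ_{[x,y],b} τ_{a,b}⁻¹ = c_{a,{b}} τ_{[x,y],b} c_{a,{b}}⁻¹`,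
where `c_{a,{b}} : b ↦ a⁻¹ba`. -/
theorem stmt10 {V : Type*} (Γ : SimpleGraph V) (a b x y : V)
    (hab : a ≠ b) (hax : a ≠ x) (hbx : b ≠ x)
    (hya : y ≠ a) (hyb : y ≠ b) (hyx : y ≠ x)
    (hdomab : Dominates Γ a b) (hdomxb : Dominates Γ x b) (hdomyb : Dominates Γ y b)
    (τ t c : MulAut (RAAG Γ))
    (hτ1 : τ (raagGen Γ b) = raagGen Γ b * raagGen Γ a)
    (hτ2 : ∀ v : V, v ≠ b → τ (raagGen Γ v) = raagGen Γ v)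
    (ht1 : t (raagGen Γ b) = raagGen Γ b * ⁅raagGen Γ x, raagGen Γ y⁆)
    (ht2 : ∀ v : V, v ≠ b → t (raagGen Γ v) = raagGen Γ v)
    (hc1 : c (raagGen Γ b) = (raagGen Γ a)⁻¹ * raagGen Γ b * raagGen Γ a)
    (hc2 : ∀ v : V, v ≠ b → c (raagGen Γ v) = raagGen Γ v) :
    τ * t * τ⁻¹ = c * t * c⁻¹ :=
  stmt10_general Γ a b x y hab hbx hyb τ t c hτ1 hτ2 ht1 ht2 hc1 hc2
end

section
/- Let α ∈ Aut(A_Γ) be a product of dominated transvections, partial conjugations, and inversions (i.e. α lies in the pure automorphism group Aut⁰(A_Γ)), and let α_* be the induced automorphism of the abelianization H_Γ with matrix entries ⟨α_* b, a⟩ relative to the vertex basis. Then for vertices a, b: if ⟨α_* b, a⟩ ≠ 0 then a = b or a ≥ b (a dominates b, i.e. lk(b) ⊆ st(a)). -/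
open scoped commutatorElement

/-- The coordinate of the image of an element of `A_Γ` in the abelianization `H_Γ`
with respect to the basis vector given by the vertex `a` (written multiplicatively):
the homomorphism `A_Γ → ℤ` sending the generator `a ↦ 1` and all other generators to `0`. -/
def coordHom {V : Type*} [DecidableEq V] (Γ : SimpleGraph V) (a : V) :
    RAAG Γ →* Multiplicative ℤ :=
  PresentedGroup.toGroup
    (f := fun v => if v = a then Multiplicative.ofAdd 1 else 1)
    (by
      rintro r ⟨x, y, hxy, rfl⟩
      rw [map_commutatorElement]
      exact commutatorElement_eq_one_iff_commute.mpr (Commute.all _ _))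

/-- The Laurence–Servatius generators of the pure automorphism group `Aut⁰(A_Γ)`:
dominated transvections (with letters as multipliers and acted letters), partial
conjugations, and inversions. -/
def PureGens {V : Type*} (Γ : SimpleGraph V) : Set (MulAut (RAAG Γ)) :=
  {φ | -- dominated transvections τ_{x,y} for letters x ≥ y
       (∃ (p q : V × Bool), p.1 ≠ q.1 ∧ Dominates Γ p.1 q.1 ∧
          φ ((if q.2 then raagGen Γ q.1 else (raagGen Γ q.1)⁻¹)) =
            (if q.2 then raagGen Γ q.1 else (raagGen Γ q.1)⁻¹) *
              (if p.2 then raagGen Γ p.1 else (raagGen Γ p.1)⁻¹) ∧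
          ∀ v : V, v ≠ q.1 → φ (raagGen Γ v) = raagGen Γ v) ∨
       -- partial conjugations c_{x,Y}
       (∃ (x : V) (Y : Set V),
          (∀ y ∈ Y, y ≠ x ∧ ¬ Γ.Adj x y) ∧
          (∀ y ∈ Y, ∀ z : V, Γ.Adj y z → (z = x ∨ Γ.Adj x z ∨ z ∈ Y)) ∧
          (∀ y ∈ Y, φ (raagGen Γ y) = (raagGen Γ x)⁻¹ * raagGen Γ y * raagGen Γ x) ∧
          (∀ v : V, v ∉ Y → φ (raagGen Γ v) = raagGen Γ v)) ∨
       -- inversions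
       (∃ x : V, φ (raagGen Γ x) = (raagGen Γ x)⁻¹ ∧
          ∀ v : V, v ≠ x → φ (raagGen Γ v) = raagGen Γ v)}

/-!
Domination is a preorder on the vertices. Call an automorphism `φ` triangular if the
`a`-coordinate of `φ g` in `H_Γ` can be nonzero only when `g` has a nonzero coordinate at
some `c` with `a ≥ c`; triangular automorphisms form a submonoid. Each Laurence–Servatius
generator and its inverse acts on `H_Γ` by an elementary matrix `I + m E_{x,y}` with `x ≥ y`
(`m = ±1` for a transvection, `x = y` and `m = -2` for an inversion, `m = 0` for a partial
conjugation), hence is triangular, and so is every element of `Aut⁰(A_Γ)`.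
-/

section Domination

variable {V : Type*} {Γ : SimpleGraph V}

theorem dominates_refl (a : V) : Dominates Γ a a := fun _ h => Or.inr h

theorem Dominates.trans {a b c : V} (hab : Dominates Γ a b) (hbc : Dominates Γ b c) :
    Dominates Γ a c := by
  intro v hcv
  rcases hbc v hcv with rfl | hbv
  · rcases hab c hcv.symm with rfl | hac
    · exact Or.inr hcv
    · rcases hbc a hac.symm with h | hba
      · exact Or.inl h.symm
      · exact Or.inr hba.symm
  · exact hab v hbv

end Domination

theorem ite_self_inv_eq_zpow {G : Type*} [Group G] (g : G) (s : Bool) :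
    (if s then g else g⁻¹) = g ^ (if s then (1 : ℤ) else -1) := by
  cases s <;> simp

namespace RAAG

variable {V : Type*} {Γ : SimpleGraph V}

theorem monoidHom_ext_raagGen {G : Type*} [Group G] {f g : RAAG Γ →* G}
    (h : ∀ v, f (raagGen Γ v) = g (raagGen Γ v)) (x : RAAG Γ) : f x = g x :=
  DFunLike.congr_fun (PresentedGroup.ext h) x

variable [DecidableEq V]

@[simp]
theorem coordHom_raagGen (a v : V) :
    coordHom Γ a (raagGen Γ v) = if v = a then Multiplicative.ofAdd 1 else 1 :=
  PresentedGroup.toGroup.of _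

variable (Γ) in
def triangularSubmonoid : Submonoid (MulAut (RAAG Γ)) where
  carrier := {φ | ∀ a g, coordHom Γ a (φ g) ≠ 1 → ∃ c, coordHom Γ c g ≠ 1 ∧ Dominates Γ a c}
  one_mem' a g h := ⟨a, h, dominates_refl a⟩
  mul_mem' {φ ψ} hφ hψ a g h := by
    obtain ⟨c, hc, hac⟩ := hφ a (ψ g) h
    obtain ⟨d, hd, hcd⟩ := hψ c g hc
    exact ⟨d, hd, hac.trans hcd⟩

theorem mem_triangularSubmonoid_of_coordHom_apply {φ : MulAut (RAAG Γ)}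
    (h : ∀ a g, coordHom Γ a (φ g) = coordHom Γ a g) : φ ∈ triangularSubmonoid Γ :=
  fun a g hg => ⟨a, h a g ▸ hg, dominates_refl a⟩

/-- `φ` induces the elementary matrix `I + m E_{x,y}` on `H_Γ`. -/
def InducesElementary (x y : V) (m : ℤ) (φ : MulAut (RAAG Γ)) : Prop :=
  ∀ a g, coordHom Γ a (φ g) = coordHom Γ a g * coordHom Γ y g ^ (if a = x then m else 0)

theorem InducesElementary.mem_triangularSubmonoid {x y : V} {m : ℤ} {φ : MulAut (RAAG Γ)}
    (hxy : Dominates Γ x y) (h : InducesElementary x y m φ) : φ ∈ triangularSubmonoid Γ := by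
  intro a g hg
  by_cases ha : coordHom Γ a g = 1
  · rw [h, ha, one_mul] at hg
    split_ifs at hg with hax
    · subst hax
      exact ⟨y, fun hy => hg (by rw [hy, one_zpow]), hxy⟩
    · exact absurd (zpow_zero _) hg
  · exact ⟨a, ha, dominates_refl a⟩

theorem InducesElementary.inv {x y : V} {m : ℤ} {φ : MulAut (RAAG Γ)} (hxy : x ≠ y)
    (h : InducesElementary x y m φ) : InducesElementary x y (-m) φ⁻¹ := by
  intro a g
  have hy : coordHom Γ y (φ⁻¹ g) = coordHom Γ y g := by
    simpa [Ne.symm hxy] using (h y (φ⁻¹ g)).symm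
  have ha := h a (φ⁻¹ g)
  rw [MulAut.apply_inv_self, hy] at ha
  rw [ha]
  split_ifs <;> group

theorem inducesElementary_of_raagGen {x y : V} {m : ℤ} {φ : MulAut (RAAG Γ)}
    (hfix : ∀ v, v ≠ y → φ (raagGen Γ v) = raagGen Γ v)
    (hy : ∀ a, coordHom Γ a (φ (raagGen Γ y)) =
      coordHom Γ a (raagGen Γ y) * coordHom Γ a (raagGen Γ x) ^ m) :
    InducesElementary x y m φ := by
  intro a
  refine monoidHom_ext_raagGen (f := (coordHom Γ a).comp φ.toMonoidHom)
    (g := coordHom Γ a * coordHom Γ y ^ (if a = x then m else 0)) fun v => ?_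
  show coordHom Γ a (φ (raagGen Γ v)) =
    coordHom Γ a (raagGen Γ v) * coordHom Γ y (raagGen Γ v) ^ (if a = x then m else 0)
  by_cases hv : v = y
  · subst hv
    rw [hy]
    by_cases hax : a = x <;> simp [hax, Ne.symm]
  · simp [hfix v hv, hv]

theorem coordHom_apply_raagGen_of_transvection {x y : V} {s t : Bool} {φ : MulAut (RAAG Γ)}
    (h : φ (raagGen Γ y ^ (if s then (1 : ℤ) else -1)) =
      raagGen Γ y ^ (if s then (1 : ℤ) else -1) * raagGen Γ x ^ (if t then (1 : ℤ) else -1))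
    (a : V) :
    coordHom Γ a (φ (raagGen Γ y)) =
      coordHom Γ a (raagGen Γ y) *
        coordHom Γ a (raagGen Γ x) ^ (if s = t then (1 : ℤ) else -1) := by
  have ha := congrArg (coordHom Γ a) h
  simp only [map_mul, map_zpow] at ha
  generalize coordHom Γ a (φ (raagGen Γ y)) = u, coordHom Γ a (raagGen Γ y) = v,
    coordHom Γ a (raagGen Γ x) = w at ha ⊢
  cases s <;> cases t <;>
    simp only [if_true, if_false, Bool.false_eq_true, Bool.true_eq_false, zpow_one, zpow_neg]
      at ha ⊢
  all_goals first | exact ha | simp only [← inv_inj (a := u), ha, mul_inv, inv_inv]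

theorem inducesElementary_of_inversion {x : V} {φ : MulAut (RAAG Γ)}
    (hx : φ (raagGen Γ x) = (raagGen Γ x)⁻¹)
    (hfix : ∀ v, v ≠ x → φ (raagGen Γ v) = raagGen Γ v) :
    InducesElementary x x (-2) φ :=
  inducesElementary_of_raagGen hfix fun a => by rw [hx, map_inv]; group

theorem coordHom_apply_of_partialConj {x : V} {Y : Set V} {φ : MulAut (RAAG Γ)}
    (hconj : ∀ y ∈ Y, φ (raagGen Γ y) = (raagGen Γ x)⁻¹ * raagGen Γ y * raagGen Γ x)
    (hfix : ∀ v, v ∉ Y → φ (raagGen Γ v) = raagGen Γ v) (a : V) (g : RAAG Γ) :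
    coordHom Γ a (φ g) = coordHom Γ a g := by
  refine monoidHom_ext_raagGen (f := (coordHom Γ a).comp φ.toMonoidHom) (fun v => ?_) g
  show coordHom Γ a (φ (raagGen Γ v)) = coordHom Γ a (raagGen Γ v)
  by_cases hv : v ∈ Y
  · rw [hconj v hv, map_mul, map_mul, map_inv, inv_mul_cancel_comm]
  · rw [hfix v hv]

theorem mem_triangularSubmonoid_of_mem_pureGens {φ : MulAut (RAAG Γ)} (hφ : φ ∈ PureGens Γ) :
    φ ∈ triangularSubmonoid Γ ∧ φ⁻¹ ∈ triangularSubmonoid Γ := by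
  rcases hφ with ⟨⟨x, t⟩, ⟨y, s⟩, hxy, hdom, hφy, hfix⟩ | ⟨x, Y, -, -, hconj, hfix⟩ |
    ⟨x, hx, hfix⟩
  · simp only [ite_self_inv_eq_zpow] at hφy
    have hE := inducesElementary_of_raagGen hfix (coordHom_apply_raagGen_of_transvection hφy)
    exact ⟨hE.mem_triangularSubmonoid hdom, (hE.inv hxy).mem_triangularSubmonoid hdom⟩
  · have hφ := coordHom_apply_of_partialConj hconj hfix
    refine ⟨mem_triangularSubmonoid_of_coordHom_apply hφ,
      mem_triangularSubmonoid_of_coordHom_apply fun a g => ?_⟩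
    rw [← hφ a (φ⁻¹ g), MulAut.apply_inv_self]
  · have hx' : φ⁻¹ (raagGen Γ x) = (raagGen Γ x)⁻¹ := by
      rw [MulAut.inv_apply, MulEquiv.symm_apply_eq, map_inv, hx, inv_inv]
    have hfix' (v : V) (hv : v ≠ x) : φ⁻¹ (raagGen Γ v) = raagGen Γ v := by
      rw [MulAut.inv_apply, MulEquiv.symm_apply_eq, hfix v hv]
    exact ⟨(inducesElementary_of_inversion hx hfix).mem_triangularSubmonoid (dominates_refl x),
      (inducesElementary_of_inversion hx' hfix').mem_triangularSubmonoid (dominates_refl x)⟩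

theorem closure_pureGens_le_triangularSubmonoid :
    (Subgroup.closure (PureGens Γ)).toSubmonoid ≤ triangularSubmonoid Γ := by
  rw [Subgroup.closure_toSubmonoid, Submonoid.closure_le]
  rintro φ (hφ | hφ)
  · exact (mem_triangularSubmonoid_of_mem_pureGens hφ).1
  · simpa using (mem_triangularSubmonoid_of_mem_pureGens hφ).2

end RAAG

/-- if `α` lies in the pure automorphism group `Aut⁰(A_Γ)` (generated by
dominated transvections, partial conjugations and inversions) and the matrix entry
`⟨α_* b, a⟩` of the induced automorphism of `H_Γ` is nonzero, then `a = b` or `a ≥ b`. -/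
theorem stmt13 {V : Type*} [DecidableEq V] (Γ : SimpleGraph V)
    (α : MulAut (RAAG Γ)) (hα : α ∈ Subgroup.closure (PureGens Γ))
    (a b : V) (h : coordHom Γ a (α (raagGen Γ b)) ≠ 1) :
    a = b ∨ Dominates Γ a b := by
  obtain ⟨c, hc, hac⟩ := RAAG.closure_pureGens_le_triangularSubmonoid hα a (raagGen Γ b) h
  obtain rfl : b = c := by
    by_contra hbc
    exact hc (by simp [hbc])
  exact Or.inr hac
end

section
/- Let F be the free group on x and y, and let G = (ℤ/2ℤ)⁵ ⋉ K) × ℤ where K = ker(F → ℤ²) is the commutator subgroup of F (with some action of (ℤ/2ℤ)⁵ on K). Then G is not finitely generated. -/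
/-!
The homomorphism from the free group on `x, y` to the lamplighter group `ℤ/2 ≀ ℤ` sending `x` to
the shift and `y` to the lamp at `0` maps the commutator subgroup into the lamp group, an abelian
group of exponent `2`, whose finitely generated subgroups are finite. The commutators `⁅xᵃ, y⁆`
map to the configurations lighting the lamps at `a` and `0`, so the image is infinite and the
commutator subgroup is not finitely generated. Finitely generated groups pass to quotients and
to finite-index subgroups, so this propagates to `(K ⋊ (ℤ/2)⁵) × ℤ`.
-/

open scoped commutatorElement

theorem Pi.mulSingle_left_injective {ι M : Type*} [DecidableEq ι] [One M] {m : M} (hm : m ≠ 1) :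
    Function.Injective fun i : ι => Pi.mulSingle i m := by
  intro i j hij
  by_contra hne
  have h := congrFun hij j
  dsimp only at h
  rw [Pi.mulSingle_eq_same, Pi.mulSingle_eq_of_ne (Ne.symm hne)] at h
  exact hm h.symm

attribute [local instance] arrowAction in
theorem mulAutArrow_mulSingle {G A M : Type*} [Group G] [MulAction G A] [DecidableEq A]
    [Monoid M] (g : G) (a : A) (m : M) :
    mulAutArrow g (Pi.mulSingle a m) = Pi.mulSingle (g • a) m := by
  ext b
  show (Pi.mulSingle a m : A → M) (g⁻¹ • b) = (Pi.mulSingle (g • a) m : A → M) b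
  simp only [Pi.mulSingle_apply, inv_smul_eq_iff]

namespace SemidirectProduct

variable {N G H : Type*} [Group N] [Group G] [Group H] {φ : G →* MulAut N}

def leftHomOfRightEqOne (f : H →* N ⋊[φ] G) (hf : ∀ h, (f h).right = 1) : H →* N where
  toFun h := (f h).left
  map_one' := by simp
  map_mul' a b := by simp [hf]

theorem fg_left_of_finite [Finite G] [Group.FG (N ⋊[φ] G)] : Group.FG N := by
  have : Group.FG (inl : N →* N ⋊[φ] G).range := by
    rw [range_inl_eq_ker_rightHom (φ := φ)]; infer_instance
  let e : N ≃* (inl : N →* N ⋊[φ] G).range := MonoidHom.ofInjective inl_injective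
  exact Group.fg_of_surjective (f := e.symm.toMonoidHom) e.symm.surjective

end SemidirectProduct

/-- The unrestricted wreath product: lamp configurations need not be finitely supported. -/
abbrev Lamplighter : Type :=
  (Multiplicative ℤ → Multiplicative (ZMod 2)) ⋊[mulAutArrow] Multiplicative ℤ

namespace Lamplighter

def lamp (a : ℤ) : Multiplicative ℤ → Multiplicative (ZMod 2) :=
  Pi.mulSingle (Multiplicative.ofAdd a) (Multiplicative.ofAdd 1)

theorem lamp_injective : Function.Injective lamp :=
  (Pi.mulSingle_left_injective (by decide)).comp Multiplicative.ofAdd.injective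

def shift : Lamplighter := SemidirectProduct.inr (Multiplicative.ofAdd 1)

theorem shift_zpow (a : ℤ) : shift ^ a = SemidirectProduct.inr (Multiplicative.ofAdd a) := by
  rw [shift, ← map_zpow, ← ofAdd_zsmul, smul_eq_mul, mul_one]

theorem shift_zpow_conj_lamp (a b : ℤ) :
    shift ^ a * SemidirectProduct.inl (lamp b) * shift ^ (-a) =
      SemidirectProduct.inl (lamp (a + b)) := by
  rw [shift_zpow, shift_zpow, ofAdd_neg, ← SemidirectProduct.inl_aut, lamp, lamp,
    mulAutArrow_mulSingle, smul_eq_mul, ← ofAdd_add]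

theorem exponentExists_lamps :
    Monoid.ExponentExists (Multiplicative ℤ → Multiplicative (ZMod 2)) :=
  ⟨2, two_pos, fun x => funext fun p =>
    (by decide : ∀ y : Multiplicative (ZMod 2), y ^ 2 = 1) (x p)⟩

end Lamplighter

namespace FreeGroup

open Lamplighter

def toLamplighter : FreeGroup Bool →* Lamplighter :=
  FreeGroup.lift fun b => cond b shift (SemidirectProduct.inl (lamp 0))

theorem toLamplighter_commutatorElement (a : ℤ) :
    toLamplighter ⁅of true ^ a, of false⁆ = SemidirectProduct.inl (lamp a * (lamp 0)⁻¹) := by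
  simp only [commutatorElement_def, _root_.map_mul, _root_.map_inv, map_zpow, toLamplighter,
    lift_apply_of, cond_true, cond_false, ← zpow_neg, shift_zpow_conj_lamp, add_zero]

theorem not_fg_commutator : ¬ Group.FG (commutator (FreeGroup Bool)) := by
  intro hfg
  let f : commutator (FreeGroup Bool) →* (Multiplicative ℤ → Multiplicative (ZMod 2)) :=
    SemidirectProduct.leftHomOfRightEqOne (toLamplighter.comp (commutator _).subtype) fun k =>
      Abelianization.commutator_subset_ker (SemidirectProduct.rightHom.comp toLamplighter) k.2
  have : Finite f.range := CommGroup.finite_of_fg_isMulTorsion _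
    ((ExponentExists.isMulTorsion exponentExists_lamps).subgroup _)
  have hmem (a : ℤ) : lamp a * (lamp 0)⁻¹ ∈ f.range :=
    ⟨⟨_, Subgroup.commutator_mem_commutator (Subgroup.mem_top (of true ^ a))
      (Subgroup.mem_top (of false))⟩,
      congrArg SemidirectProduct.left (toLamplighter_commutatorElement a)⟩
  have : Finite ℤ := Finite.of_injective (fun a => (⟨_, hmem a⟩ : f.range)) fun a b h =>
    lamp_injective (mul_left_injective _ (congrArg Subtype.val h))
  exact not_finite ℤ

end FreeGroup

/-- Let `F` be the free group on two generators `x, y` and let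
`K = ker(F → ℤ²)` be the commutator subgroup (the kernel of the abelianization map).
Then for any action of `(ℤ/2ℤ)⁵` on `K`, the group `((ℤ/2ℤ)⁵ ⋉ K) × ℤ`
(formalized as `(K ⋊[φ] (ℤ/2ℤ)⁵) × ℤ`) is not finitely generated. -/
theorem stmt17
    (K : Subgroup (FreeGroup Bool))
    (hK : K = MonoidHom.ker
      (Abelianization.of : FreeGroup Bool →* Abelianization (FreeGroup Bool)))
    (φ : Multiplicative (Fin 5 → ZMod 2) →* MulAut ↥K) :
    ¬ Group.FG ((↥K ⋊[φ] Multiplicative (Fin 5 → ZMod 2)) × Multiplicative ℤ) := by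
  rw [Abelianization.ker_of] at hK
  subst hK
  intro hfg
  have : Group.FG (↥(commutator (FreeGroup Bool)) ⋊[φ] Multiplicative (Fin 5 → ZMod 2)) :=
    Group.fg_of_surjective (f := MonoidHom.fst _ (Multiplicative ℤ)) Prod.fst_surjective
  exact FreeGroup.not_fg_commutator (SemidirectProduct.fg_left_of_finite (φ := φ))
end
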